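/- If a₁ > 1/9, then s_n ≠ 0 (hence all σ_i are strictly positive, so the smallest index m with s_{n−m} ≠ 0 is m = 1) and the smallest value satisfies σ_n > 1/(10 g_1). -/

import Mathlib

noncomputable section

/-- The `k`-th elementary symmetric function of `σ₁, …, σ_n` (with value `1` for `k = 0`).
(Ratios with zero denominator are interpreted as `0`, which is Lean's convention.) -/
def esym (n : ℕ) (σ : Fin n → ℝ) (k : ℕ) : ℝ :=
  ∑ t ∈ Finset.univ.powersetCard k, ∏ i ∈ t, σ i

/-- `b_k = sup_{0 ≤ i ≤ k−1} (s_{n−i}/s_{n−k})^{1/(k−i)}`. -/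
def bq (n : ℕ) (σ : Fin n → ℝ) (k : ℕ) : ℝ :=
  ⨆ i : Fin k, (esym n σ (n - (i : ℕ)) / esym n σ (n - k)) ^ ((1 : ℝ) / ((k : ℝ) - (i : ℕ)))

/-- `g_k = sup_{k+1 ≤ i ≤ n} (s_{n−i}/s_{n−k})^{1/(i−k)}` for `k < n`, and `g_n = 1`. -/
def gq (n : ℕ) (σ : Fin n → ℝ) (k : ℕ) : ℝ :=
  if k = n then 1
  else ⨆ j : Fin (n - k),
    (esym n σ (n - (k + 1 + (j : ℕ))) / esym n σ (n - k)) ^ ((1 : ℝ) / ((j : ℕ) + 1))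

/-- `a_k = b_k · g_k`. -/
def aq (n : ℕ) (σ : Fin n → ℝ) (k : ℕ) : ℝ := bq n σ k * gq n σ k

/-! Dropping one factor from the full product gives `s_n ≤ σ_m s_{n-1}` for every `m`, hence
`a₁ = (s_n / s_{n-1}) g₁ ≤ σ_m g₁`. So `a₁ > 1/9` forces `s_n ≠ 0` and `σ_m > 1/(9 g₁) > 1/(10 g₁)`. -/

lemma esym_nonneg {n : ℕ} {σ : Fin n → ℝ} (hσ : ∀ i, 0 ≤ σ i) (k : ℕ) : 0 ≤ esym n σ k :=
  Finset.sum_nonneg fun _ _ => Finset.prod_nonneg fun i _ => hσ i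

lemma esym_self (n : ℕ) (σ : Fin n → ℝ) : esym n σ n = ∏ i, σ i := by
  have h := Finset.powersetCard_self (Finset.univ : Finset (Fin n))
  rw [Finset.card_fin] at h
  simp [esym, h]

lemma esym_self_le_mul_esym_sub_one {n : ℕ} {σ : Fin n → ℝ} (hσ : ∀ i, 0 ≤ σ i) (m : Fin n) :
    esym n σ n ≤ σ m * esym n σ (n - 1) := by
  have hmem : Finset.univ.erase m ∈ (Finset.univ : Finset (Fin n)).powersetCard (n - 1) := by
    rw [Finset.mem_powersetCard, Finset.card_erase_of_mem (Finset.mem_univ m), Finset.card_fin]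
    exact ⟨Finset.subset_univ _, rfl⟩
  have hterm : ∏ i ∈ Finset.univ.erase m, σ i ≤ esym n σ (n - 1) :=
    Finset.single_le_sum (f := fun t => ∏ i ∈ t, σ i)
      (fun _ _ => Finset.prod_nonneg fun i _ => hσ i) hmem
  calc esym n σ n = σ m * ∏ i ∈ Finset.univ.erase m, σ i := by
        rw [esym_self, Finset.mul_prod_erase _ _ (Finset.mem_univ m)]
    _ ≤ σ m * esym n σ (n - 1) := mul_le_mul_of_nonneg_left hterm (hσ m)

lemma bq_one (n : ℕ) (σ : Fin n → ℝ) : bq n σ 1 = esym n σ n / esym n σ (n - 1) := by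
  rw [bq, ciSup_unique]
  norm_num

lemma gq_nonneg {n : ℕ} {σ : Fin n → ℝ} (hσ : ∀ i, 0 ≤ σ i) (k : ℕ) : 0 ≤ gq n σ k := by
  rw [gq]
  split
  · exact zero_le_one
  · exact Real.iSup_nonneg fun _ => Real.rpow_nonneg
      (div_nonneg (esym_nonneg hσ _) (esym_nonneg hσ _)) _

lemma aq_one_le_mul_gq_one {n : ℕ} {σ : Fin n → ℝ} (hσ : ∀ i, 0 ≤ σ i) (m : Fin n) :
    aq n σ 1 ≤ σ m * gq n σ 1 := by
  rw [aq, bq_one]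
  exact mul_le_mul_of_nonneg_right
    (div_le_of_le_mul₀ (esym_nonneg hσ _) (hσ m) (esym_self_le_mul_esym_sub_one hσ m))
    (gq_nonneg hσ 1)

/-- If `a₁ > 1/9`, then `s_n ≠ 0` (hence all `σ_i` are strictly positive, so the smallest
index `m` with `s_{n−m} ≠ 0` is `m = 1`), and the smallest singular value satisfies
`σ_n > 1/(10·g₁)`. -/
theorem stmt3 (n : ℕ) (hn : 1 ≤ n) (σ : Fin n → ℝ)
    (hnonneg : ∀ i, 0 ≤ σ i)
    (ha : 1 / 9 < aq n σ 1) :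
    esym n σ n ≠ 0 ∧ (∀ i, 0 < σ i) ∧
      1 / (10 * gq n σ 1) < σ ⟨n - 1, by omega⟩ := by
  have hsn : esym n σ n ≠ 0 := by
    intro h
    rw [aq, bq_one, h, zero_div, zero_mul] at ha
    norm_num at ha
  have hpos : ∀ i, 0 < σ i := fun i =>
    (hnonneg i).lt_of_ne' (Finset.prod_ne_zero_iff.mp (esym_self n σ ▸ hsn) i (Finset.mem_univ i))
  refine ⟨hsn, hpos, ?_⟩
  set m : Fin n := ⟨n - 1, by omega⟩
  have hlt : 1 / 9 < σ m * gq n σ 1 := ha.trans_le (aq_one_le_mul_gq_one hnonneg m)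
  have hg : 0 < gq n σ 1 :=
    (gq_nonneg hnonneg 1).lt_of_ne' fun h => by rw [h, mul_zero] at hlt; norm_num at hlt
  rw [div_lt_iff₀ (by positivity)]
  nlinarith
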